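/- For γ, θ ∈ ℝ, the four quaternions i, e^{γk}·i, e^{θk}·i, e^{(θ−γ)k}·i pairwise commute if and only if γ ∈ πℤ and θ ∈ πℤ. (Hence among the traceless representations ψ(γ,θ) of the four-punctured sphere group, exactly the four corner points of the pillowcase correspond to representations with abelian image, and all other points correspond to irreducible representations.) -/

import Mathlib

open Quaternion

noncomputable section

/-- The quaternion `i`. -/
def qi : ℍ[ℝ] := ⟨0, 1, 0, 0⟩

/-- The quaternion `k`. -/
def qk : ℍ[ℝ] := ⟨0, 0, 0, 1⟩

/-- The quaternionic exponential `e^{tQ} = cos t + (sin t) • Q` for a pure unit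
quaternion `Q`. -/
def expQ (t : ℝ) (Q : ℍ[ℝ]) : ℍ[ℝ] := ((Real.cos t : ℝ) : ℍ[ℝ]) + (Real.sin t) • Q

/-!
Since `k i = j`, the quaternion `e^{tk} i = cos t · i + sin t · j` is the unit vector at angle `t`
in the `ij`-plane. Two pure quaternions in that plane commute exactly when they are parallel,
so `e^{ak} i` and `e^{bk} i` commute iff `sin (b - a) = 0`, i.e. `b - a ∈ πℤ`. With `i = e^{0k} i`,
the six conditions say that all pairwise differences of `0, γ, θ, θ - γ` lie in the subgroup `πℤ`,
which holds iff `γ` and `θ` do.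
-/

def qj : ℍ[ℝ] := ⟨0, 0, 1, 0⟩

@[simp] lemma qi_re : qi.re = 0 := rfl
@[simp] lemma qi_imI : qi.imI = 1 := rfl
@[simp] lemma qi_imJ : qi.imJ = 0 := rfl
@[simp] lemma qi_imK : qi.imK = 0 := rfl
@[simp] lemma qj_re : qj.re = 0 := rfl
@[simp] lemma qj_imI : qj.imI = 0 := rfl
@[simp] lemma qj_imJ : qj.imJ = 1 := rfl
@[simp] lemma qj_imK : qj.imK = 0 := rfl
@[simp] lemma qk_re : qk.re = 0 := rfl
@[simp] lemma qk_imI : qk.imI = 0 := rfl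
@[simp] lemma qk_imJ : qk.imJ = 0 := rfl
@[simp] lemma qk_imK : qk.imK = 1 := rfl

lemma commute_smul_qi_add_smul_qj_iff (a b c d : ℝ) :
    Commute (a • qi + b • qj) (c • qi + d • qj) ↔ a * d - b * c = 0 := by
  simp [Commute, SemiconjBy, Quaternion.ext_iff]
  grind

lemma expQ_qk_mul_qi (t : ℝ) : expQ t qk * qi = Real.cos t • qi + Real.sin t • qj := by
  ext <;> simp [expQ]

lemma expQ_zero (Q : ℍ[ℝ]) : expQ 0 Q = 1 := by
  simp [expQ]

lemma sin_eq_zero_iff_mem_zmultiples_pi (x : ℝ) :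
    Real.sin x = 0 ↔ x ∈ AddSubgroup.zmultiples Real.pi := by
  simp only [Real.sin_eq_zero_iff, AddSubgroup.mem_zmultiples_iff, zsmul_eq_mul]

lemma commute_expQ_qk_mul_qi_iff (a b : ℝ) :
    Commute (expQ a qk * qi) (expQ b qk * qi) ↔ b - a ∈ AddSubgroup.zmultiples Real.pi := by
  rw [expQ_qk_mul_qi, expQ_qk_mul_qi, commute_smul_qi_add_smul_qj_iff,
    ← sin_eq_zero_iff_mem_zmultiples_pi, Real.sin_sub]
  ring_nf

lemma commute_qi_expQ_qk_mul_qi_iff (b : ℝ) :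
    Commute qi (expQ b qk * qi) ↔ b ∈ AddSubgroup.zmultiples Real.pi := by
  simpa [expQ_zero] using commute_expQ_qk_mul_qi_iff 0 b

/-- The representation `ψ(γ,θ)` of the four-punctured sphere group has abelian image if
and only if `(γ,θ)` is a corner point of the pillowcase: the four quaternions `i`,
`e^{γk}i`, `e^{θk}i`, `e^{(θ-γ)k}i` pairwise commute iff `γ ∈ πℤ` and `θ ∈ πℤ`. -/
theorem psi_abelian_iff_corner (γ θ : ℝ) :
    (Commute qi (expQ γ qk * qi) ∧
     Commute qi (expQ θ qk * qi) ∧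
     Commute qi (expQ (θ - γ) qk * qi) ∧
     Commute (expQ γ qk * qi) (expQ θ qk * qi) ∧
     Commute (expQ γ qk * qi) (expQ (θ - γ) qk * qi) ∧
     Commute (expQ θ qk * qi) (expQ (θ - γ) qk * qi)) ↔
    ((∃ m : ℤ, γ = Real.pi * m) ∧ (∃ n : ℤ, θ = Real.pi * n)) := by
  have mem_iff (x : ℝ) : x ∈ AddSubgroup.zmultiples Real.pi ↔ ∃ m : ℤ, x = Real.pi * m := by
    simp only [AddSubgroup.mem_zmultiples_iff, zsmul_eq_mul, mul_comm, eq_comm]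
  simp only [commute_qi_expQ_qk_mul_qi_iff, commute_expQ_qk_mul_qi_iff, ← mem_iff]
  constructor
  · rintro ⟨hγ, hθ, -⟩
    exact ⟨hγ, hθ⟩
  · rintro ⟨hγ, hθ⟩
    have hθγ := sub_mem hθ hγ
    exact ⟨hγ, hθ, hθγ, hθγ, sub_mem hθγ hγ, sub_mem hθγ hθ⟩
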